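/- There exists a universal constant ε₀ > 0 such that the following holds for every graph G. Let (A, X) be the (P3) input construction for G, with A ∈ ℝ^{3n'×3n'}. If there exist symmetric matrices L, H ∈ ℝ^{3n'×3n'} such that L fits X, ‖H‖_F ≤ ε₀, A + L + H is positive semidefinite, and rank(A + L + H) ≤ 3, then G is 3-colorable. -/

import Mathlib

open Matrix

noncomputable section

/-- Unordered pairs of distinct vertices of `Fin N`, represented by ordered pairs
`(i, j)` with `i < j`. -/
abbrev Pairs (N : ℕ) := {p : Fin N × Fin N // p.1 < p.2}

/-- Vertices of the Peeters supergraph: the original vertices together with, for each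
unordered pair `{i,j}` of distinct vertices, four new vertices `a, b, c, d`
(encoded as `(q, 0), (q, 1), (q, 2), (q, 3)`). -/
abbrev PV (N : ℕ) := Fin N ⊕ (Pairs N × Fin 4)

/-- The generating relation for the edges of the Peeters supergraph: the original edges
together with, for each unordered pair `q = {i,j}`, the nine edges
`{i,a}, {i,b}, {a,b}, {j,c}, {j,d}, {c,d}, {a,j}, {i,d}, {b,c}`. -/
def peetersRel (N : ℕ) (G : SimpleGraph (Fin N)) : PV N → PV N → Prop := fun x y =>
  (∃ i j : Fin N, G.Adj i j ∧ x = Sum.inl i ∧ y = Sum.inl j) ∨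
  (∃ q : Pairs N,
    (x = Sum.inl q.val.1 ∧ y = Sum.inr (q, 0)) ∨
    (x = Sum.inl q.val.1 ∧ y = Sum.inr (q, 1)) ∨
    (x = Sum.inr (q, 0) ∧ y = Sum.inr (q, 1)) ∨
    (x = Sum.inl q.val.2 ∧ y = Sum.inr (q, 2)) ∨
    (x = Sum.inl q.val.2 ∧ y = Sum.inr (q, 3)) ∨
    (x = Sum.inr (q, 2) ∧ y = Sum.inr (q, 3)) ∨
    (x = Sum.inr (q, 0) ∧ y = Sum.inl q.val.2) ∨
    (x = Sum.inl q.val.1 ∧ y = Sum.inr (q, 3)) ∨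
    (x = Sum.inr (q, 1) ∧ y = Sum.inr (q, 2)))

/-- The Peeters supergraph `G'` of `G`. -/
def peetersGraph (N : ℕ) (G : SimpleGraph (Fin N)) : SimpleGraph (PV N) :=
  SimpleGraph.fromRel (peetersRel N G)

/-- Row/column indices of the `(P3)` input construction: pairs `(v, μ)` with
`v ∈ V(G')` and `μ ∈ {1,2,3}`. -/
abbrev Idx (N : ℕ) := PV N × Fin 3

/-- The matrix `A` of the `(P3)` input construction:
`A((v,μ),(w,ν)) = 1` if `v = w` and `μ ≠ ν`, and `0` otherwise. -/
def AP3 (N : ℕ) : Matrix (Idx N) (Idx N) ℝ := fun p q =>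
  if p.1 = q.1 ∧ p.2 ≠ q.2 then 1 else 0

/-- `L` fits the edge set `X` of the `(P3)` input construction, i.e. `L` vanishes on
all pairs `{(v,μ),(w,ν)}` with `{v,w} ∈ E(G')` and on all pairs `{(v,μ),(v,ν)}` with
`μ ≠ ν`. -/
def FitsX (N : ℕ) (G : SimpleGraph (Fin N)) (L : Matrix (Idx N) (Idx N) ℝ) : Prop :=
  (∀ p q : Idx N, (peetersGraph N G).Adj p.1 q.1 → L p q = 0) ∧
  (∀ (v : PV N) (μ ν : Fin 3), μ ≠ ν → L (v, μ) (v, ν) = 0)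


/-- The Frobenius norm of a real matrix. -/
def frob {m n : Type*} [Fintype m] [Fintype n] (A : Matrix m n ℝ) : ℝ :=
  Real.sqrt (∑ i, ∑ j, (A i j) ^ 2)

/-! A positive semidefinite matrix of rank at most 3 is the Gram matrix of vectors `v (x, μ)` in a
space of dimension at most 3. As `⟪v (x, 0), v (x, 1)⟫ = 1 + H (x, 0) (x, 1)`, the longer of these
two vectors has norm almost 1, and vectors at adjacent vertices of `G'` are almost orthogonal;
normalising gives unit vectors `ℓ x` with `|⟪ℓ x, ℓ y⟫| ≤ 1/1000` along the edges of `G'`.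

In dimension 3 an almost orthonormal triple is an almost orthonormal basis, so Parseval's identity
holds up to `O(η)`. In the Peeters gadget of `{i, j}`, put `s = ⟪ℓ i, ℓ j⟫` and `t = ⟪ℓ i, ℓ c⟫`.
Expanding `ℓ i` in the triangle `j, c, d` gives `s² + t² ≈ 1`, and expanding `⟪ℓ j, ℓ c⟫ ≈ 0` in the
triangle `i, a, b` gives `s t ≈ 0`; hence `s² ≈ 0` or `s² ≈ 1`. Being almost parallel is therefore
an equivalence relation on `V(G)`. Adjacent vertices are not related, and there are at most three
classes because four almost orthogonal unit vectors are linearly independent. -/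

open scoped RealInnerProductSpace
open Module Finset

theorem abs_apply_le_frob {m n : Type*} [Fintype m] [Fintype n] (A : Matrix m n ℝ) (i : m)
    (j : n) : |A i j| ≤ frob A := by
  refine Real.abs_le_sqrt ?_
  calc A i j ^ 2 ≤ ∑ j', A i j' ^ 2 :=
        single_le_sum (f := fun j' => A i j' ^ 2) (fun _ _ => sq_nonneg _) (mem_univ j)
    _ ≤ ∑ i', ∑ j', A i' j' ^ 2 :=
        single_le_sum (f := fun i' => ∑ j', A i' j' ^ 2)
          (fun _ _ => sum_nonneg fun _ _ => sq_nonneg _) (mem_univ i)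

theorem Matrix.PosSemidef.exists_gram {ι : Type*} [Fintype ι] {M : Matrix ι ι ℝ}
    (hM : M.PosSemidef) :
    ∃ (W : Submodule ℝ (EuclideanSpace ℝ ι)) (v : ι → W),
      gram ℝ v = M ∧ finrank ℝ W = M.rank := by
  classical
  obtain ⟨B, rfl⟩ : ∃ B : Matrix ι ι ℝ, M = Bᴴ * B := by
    open scoped MatrixOrder in
    exact CStarAlgebra.nonneg_iff_eq_star_mul_self.mp hM.nonneg
  let e := (WithLp.linearEquiv 2 ℝ (ι → ℝ)).symm
  let W := (Submodule.span ℝ (Set.range B.col)).map (e : (ι → ℝ) →ₗ[ℝ] EuclideanSpace ℝ ι)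
  refine ⟨W, fun p => ⟨e (B.col p), Submodule.mem_map_of_mem (Submodule.subset_span ⟨p, rfl⟩)⟩,
    ?_, ?_⟩
  · ext p q
    simp [gram_apply, mul_apply, EuclideanSpace.inner_eq_star_dotProduct, e, dotProduct,
      mul_comm]
  · rw [LinearEquiv.finrank_map_eq, rank_conjTranspose_mul_self, rank_eq_finrank_span_cols]

theorem SimpleGraph.Coloring.colorable_of_isEmpty_embedding {V α : Type*} {G : SimpleGraph V}
    (C : G.Coloring α) {n : ℕ} (h : IsEmpty (Fin (n + 1) ↪ α)) : G.Colorable n := by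
  have : Finite α := by
    by_contra hα
    rw [not_finite_iff_infinite] at hα
    exact h.false (Fin.valEmbedding.trans (Infinite.natEmbedding α))
  have := Fintype.ofFinite α
  refine C.colorable.mono ?_
  by_contra! hn
  exact h.false (Function.Embedding.nonempty_of_card_le (by simpa using hn)).some

variable {E : Type*} [NormedAddCommGroup E] [InnerProductSpace ℝ E]

def AlmostOrthonormal {κ : Type*} (η : ℝ) (u : κ → E) : Prop :=
  (∀ i, ‖u i‖ = 1) ∧ Pairwise fun i j => |⟪u i, u j⟫| ≤ η

namespace AlmostOrthonormal

variable {κ : Type*} {η : ℝ} {u : κ → E}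

theorem inner_self (hu : AlmostOrthonormal η u) (i : κ) : ⟪u i, u i⟫ = 1 := by
  rw [real_inner_self_eq_norm_sq, hu.1 i, one_pow]

theorem abs_inner_sub_ite_le [DecidableEq κ] (hu : AlmostOrthonormal η u) (hη : 0 ≤ η)
    (i j : κ) : |⟪u i, u j⟫ - if i = j then 1 else 0| ≤ η := by
  by_cases hij : i = j
  · rw [hij, hu.inner_self]; simpa using hη
  · simpa [hij] using hu.2 hij

theorem sum_sq_le_norm_sq [Fintype κ] (hu : AlmostOrthonormal η u) (p : κ → ℝ) :
    (1 - (Fintype.card κ - 1) * η) * ∑ i, p i ^ 2 ≤ ‖∑ i, p i • u i‖ ^ 2 := by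
  classical
  have hexpand : ‖∑ i, p i • u i‖ ^ 2 = ∑ i, ∑ j, p i * p j * ⟪u i, u j⟫ := by
    simp only [← real_inner_self_eq_norm_sq, sum_inner, inner_sum, real_inner_smul_left,
      real_inner_smul_right]
    exact sum_congr rfl fun i _ => sum_congr rfl fun j _ => by rw [real_inner_comm]; ring
  have hterm : ∀ i j, (if i = j then (1 + η) * p i ^ 2 else 0) - η * (p i ^ 2 + p j ^ 2) / 2
      ≤ p i * p j * ⟪u i, u j⟫ := by
    intro i j
    by_cases hij : i = j
    · subst hij; rw [hu.inner_self, if_pos rfl]; exact le_of_eq (by ring)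
    · have h := abs_le.mp (hu.2 hij)
      rw [if_neg hij]
      nlinarith [mul_nonneg (sub_nonneg.2 h.2) (sq_nonneg (p i + p j)),
        mul_nonneg (neg_le_iff_add_nonneg.1 h.1) (sq_nonneg (p i - p j))]
  have hsum : ∑ i, ∑ j, ((if i = j then (1 + η) * p i ^ 2 else 0) - η * (p i ^ 2 + p j ^ 2) / 2)
      = (1 - (Fintype.card κ - 1) * η) * ∑ i, p i ^ 2 := by
    simp only [sum_sub_distrib, sum_ite_eq, mem_univ, if_true, ← sum_div, ← mul_sum,
      sum_add_distrib, sum_const, card_univ, nsmul_eq_mul]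
    ring
  rw [hexpand, ← hsum]
  exact sum_le_sum fun i _ => sum_le_sum fun j _ => hterm i j

theorem linearIndependent [Fintype κ] (hu : AlmostOrthonormal η u)
    (hη : (Fintype.card κ - 1) * η < 1) : LinearIndependent ℝ u := by
  rw [Fintype.linearIndependent_iff]
  intro p hp i
  have h := hu.sum_sq_le_norm_sq p
  rw [hp, norm_zero, zero_pow two_ne_zero] at h
  have hsq : ∑ i, p i ^ 2 = 0 :=
    le_antisymm (nonpos_of_mul_nonpos_right h (by linarith)) (by positivity)
  exact pow_eq_zero_iff two_ne_zero |>.mp <|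
    (sum_eq_zero_iff_of_nonneg fun i _ => sq_nonneg (p i)).mp hsq i (mem_univ i)

theorem card_le_finrank [Fintype κ] [FiniteDimensional ℝ E] (hu : AlmostOrthonormal η u)
    (hη : (Fintype.card κ - 1) * η < 1) : Fintype.card κ ≤ finrank ℝ E :=
  (hu.linearIndependent hη).fintype_card_le_finrank

theorem span_eq_top [Fintype κ] [FiniteDimensional ℝ E] (hu : AlmostOrthonormal η u)
    (hη : (Fintype.card κ - 1) * η < 1) (hE : finrank ℝ E ≤ Fintype.card κ) :
    Submodule.span ℝ (Set.range u) = ⊤ :=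
  (hu.linearIndependent hη).span_eq_top_of_card_eq_finrank'
    (le_antisymm (hu.card_le_finrank hη) hE)

theorem abs_inner_sub_sum_le [Fintype κ] (hu : AlmostOrthonormal η u) (hη : 0 ≤ η)
    (p : κ → ℝ) (c : E) :
    |⟪∑ j, p j • u j, c⟫ - ∑ i, ⟪∑ j, p j • u j, u i⟫ * ⟪u i, c⟫|
      ≤ (∑ j, |p j|) * (Fintype.card κ * η * ‖c‖) := by
  classical
  have hdefect : ⟪∑ j, p j • u j, c⟫ - ∑ i, ⟪∑ j, p j • u j, u i⟫ * ⟪u i, c⟫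
      = ∑ j, p j * ∑ i, ((if j = i then 1 else 0) - ⟪u j, u i⟫) * ⟪u i, c⟫ := by
    simp only [sum_inner, real_inner_smul_left, sub_mul, sum_sub_distrib, ite_mul, one_mul,
      zero_mul, sum_ite_eq, mem_univ, if_true, mul_sub, mul_sum, sum_mul]
    rw [sum_comm]
    simp only [mul_assoc]
  have hrow : ∀ j, |∑ i, ((if j = i then 1 else 0) - ⟪u j, u i⟫) * ⟪u i, c⟫|
      ≤ Fintype.card κ * η * ‖c‖ := by
    intro j
    calc _ ≤ ∑ i, |((if j = i then 1 else 0) - ⟪u j, u i⟫) * ⟪u i, c⟫| := abs_sum_le_sum_abs _ _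
      _ ≤ ∑ _i : κ, η * ‖c‖ := by
          refine sum_le_sum fun i _ => ?_
          rw [abs_mul, abs_sub_comm]
          refine mul_le_mul (hu.abs_inner_sub_ite_le hη j i) ?_ (abs_nonneg _) hη
          simpa [hu.1 i] using abs_real_inner_le_norm (u i) c
      _ = Fintype.card κ * η * ‖c‖ := by simp [mul_assoc]
  rw [hdefect, sum_mul]
  refine (abs_sum_le_sum_abs _ _).trans (sum_le_sum fun j _ => ?_)
  rw [abs_mul]
  exact mul_le_mul_of_nonneg_left (hrow j) (abs_nonneg _)

theorem sq_inner_sub_sum_mul_le [Fintype κ] (hu : AlmostOrthonormal η u) (hη : 0 ≤ η)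
    {y : E} (hy : y ∈ Submodule.span ℝ (Set.range u)) (c : E) :
    (⟪y, c⟫ - ∑ i, ⟪y, u i⟫ * ⟪u i, c⟫) ^ 2 * (1 - (Fintype.card κ - 1) * η)
      ≤ Fintype.card κ ^ 3 * η ^ 2 * ‖y‖ ^ 2 * ‖c‖ ^ 2 := by
  obtain ⟨p, rfl⟩ := (Submodule.mem_span_range_iff_exists_fun ℝ).mp hy
  set n : ℝ := (Fintype.card κ : ℝ)
  set D := ⟪∑ j, p j • u j, c⟫ - ∑ i, ⟪∑ j, p j • u j, u i⟫ * ⟪u i, c⟫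
  have hD : D ^ 2 ≤ n ^ 3 * η ^ 2 * ‖c‖ ^ 2 * ∑ j, p j ^ 2 := by
    have h2 : (∑ j, |p j|) ^ 2 ≤ n * ∑ j, p j ^ 2 := by
      simpa using sq_sum_le_card_mul_sum_sq (s := univ) (f := fun j => |p j|)
    calc D ^ 2 = |D| ^ 2 := (sq_abs D).symm
      _ ≤ ((∑ j, |p j|) * (n * η * ‖c‖)) ^ 2 :=
          pow_le_pow_left₀ (abs_nonneg D) (hu.abs_inner_sub_sum_le hη p c) 2
      _ = (∑ j, |p j|) ^ 2 * (n * η * ‖c‖) ^ 2 := mul_pow _ _ _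
      _ ≤ n * (∑ j, p j ^ 2) * (n * η * ‖c‖) ^ 2 := by gcongr
      _ = _ := by ring
  rcases le_or_gt 0 (1 - (n - 1) * η) with hpos | hneg
  · calc D ^ 2 * (1 - (n - 1) * η)
        ≤ n ^ 3 * η ^ 2 * ‖c‖ ^ 2 * ((1 - (n - 1) * η) * ∑ j, p j ^ 2) := by
          linarith [mul_le_mul_of_nonneg_right hD hpos]
      _ ≤ n ^ 3 * η ^ 2 * ‖c‖ ^ 2 * ‖∑ j, p j • u j‖ ^ 2 := by
          gcongr; exact hu.sum_sq_le_norm_sq p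
      _ = _ := by ring
  · exact (mul_nonpos_of_nonneg_of_nonpos (sq_nonneg D) hneg.le).trans (by positivity)

end AlmostOrthonormal

theorem almostOrthonormal_three {η : ℝ} {x a b : E} (hx : ‖x‖ = 1) (ha : ‖a‖ = 1)
    (hb : ‖b‖ = 1) (hxa : |⟪x, a⟫| ≤ η) (hxb : |⟪x, b⟫| ≤ η) (hab : |⟪a, b⟫| ≤ η) :
    AlmostOrthonormal η ![x, a, b] := by
  refine ⟨fun i => by fin_cases i <;> assumption, fun i j hij => ?_⟩
  fin_cases i <;> fin_cases j <;> simp_all [real_inner_comm]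

theorem abs_inner_sub_sum_three_le [FiniteDimensional ℝ E] (hE : finrank ℝ E ≤ 3) {η : ℝ}
    (hη0 : 0 ≤ η) (hη : η ≤ 1 / 1000) {x a b : E} (hu : AlmostOrthonormal η ![x, a, b])
    {y c : E} (hy : ‖y‖ = 1) (hc : ‖c‖ = 1) :
    |⟪y, c⟫ - (⟪y, x⟫ * ⟪x, c⟫ + ⟪y, a⟫ * ⟪a, c⟫ + ⟪y, b⟫ * ⟪b, c⟫)| ≤ 6 * η := by
  have hspan := hu.span_eq_top (by norm_num; linarith) (by simpa using hE)
  have h := hu.sq_inner_sub_sum_mul_le hη0 (hspan ▸ Submodule.mem_top : y ∈ _) c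
  simp only [Fin.sum_univ_three, Fintype.card_fin, hy, hc, Matrix.cons_val_zero,
    Matrix.cons_val_one, Matrix.cons_val_two, Matrix.head_cons, Matrix.tail_cons] at h
  norm_num at h
  set D := ⟪y, c⟫ - (⟪y, x⟫ * ⟪x, c⟫ + ⟪y, a⟫ * ⟪a, c⟫ + ⟪y, b⟫ * ⟪b, c⟫)
  refine abs_le_of_sq_le_sq ?_ (by positivity)
  nlinarith [mul_nonneg (sq_nonneg D) hη0]

theorem sq_le_or_le_sq_of_abs_mul_le {s t : ℝ} (hst : |s * t| ≤ 1 / 100)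
    (hsum : |1 - s ^ 2 - t ^ 2| ≤ 1 / 100) : s ^ 2 ≤ 1 / 100 ∨ 81 / 100 ≤ s ^ 2 := by
  by_contra! h
  have ht : 99 / 100 - s ^ 2 ≤ t ^ 2 := by linarith [(abs_le.mp hsum).2]
  have hst2 : (s * t) ^ 2 ≤ (1 / 100) ^ 2 := sq_le_sq' (abs_le.mp hst).1 (abs_le.mp hst).2
  nlinarith [mul_le_mul_of_nonneg_left ht (sq_nonneg s), mul_pos (sub_pos.2 h.1) (sub_pos.2 h.2)]

theorem abs_inner_mul_inner_le {u v w : E} {η : ℝ} (hu : ‖u‖ = 1) (hw : ‖w‖ = 1)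
    (huv : |⟪u, v⟫| ≤ η) : |⟪u, v⟫ * ⟪u, w⟫| ≤ η := by
  have h := abs_real_inner_le_norm u w
  rw [hu, hw, one_mul] at h
  rw [abs_mul]
  nlinarith [abs_nonneg ⟪u, v⟫, abs_nonneg ⟪u, w⟫]

theorem sq_inner_le_or_le_sq_inner_of_gadget [FiniteDimensional ℝ E] (hE : finrank ℝ E ≤ 3)
    {η : ℝ} (hη0 : 0 ≤ η) (hη : η ≤ 1 / 1000) {x a b y c d : E}
    (hxab : AlmostOrthonormal η ![x, a, b]) (hycd : AlmostOrthonormal η ![y, c, d])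
    (hay : |⟪a, y⟫| ≤ η) (hxd : |⟪x, d⟫| ≤ η) (hbc : |⟪b, c⟫| ≤ η) :
    ⟪x, y⟫ ^ 2 ≤ 1 / 100 ∨ 81 / 100 ≤ ⟪x, y⟫ ^ 2 := by
  have hx : ‖x‖ = 1 := hxab.1 0
  have ha : ‖a‖ = 1 := hxab.1 1
  have hb : ‖b‖ = 1 := hxab.1 2
  have hy : ‖y‖ = 1 := hycd.1 0
  have hc : ‖c‖ = 1 := hycd.1 1
  have hyc : |⟪y, c⟫| ≤ η := hycd.2 (by decide : (0 : Fin 3) ≠ 1)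
  have hst := abs_inner_sub_sum_three_le hE hη0 hη hxab hy hc
  have hsum := abs_inner_sub_sum_three_le hE hη0 hη hycd hx hx
  rw [real_inner_comm x y, real_inner_comm a y, real_inner_comm b y] at hst
  rw [real_inner_self_eq_norm_sq, hx, real_inner_comm x y, real_inner_comm x c,
    real_inner_comm x d, one_pow, ← sq, ← sq, ← sq] at hsum
  have hayc := abs_inner_mul_inner_le ha hc hay
  have hbcy := abs_inner_mul_inner_le hb hy hbc
  have hxd2 : ⟪x, d⟫ ^ 2 ≤ η / 1000 :=
    (sq_le_sq' (abs_le.mp hxd).1 (abs_le.mp hxd).2).trans (by nlinarith)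
  refine sq_le_or_le_sq_of_abs_mul_le (t := ⟪x, c⟫) (abs_le.mpr ⟨?_, ?_⟩) (abs_le.mpr ⟨?_, ?_⟩)
  all_goals linarith [abs_le.mp hst, abs_le.mp hsum, abs_le.mp hayc, abs_le.mp hbcy,
    abs_le.mp hyc, sq_nonneg ⟪x, d⟫]

theorem sq_inner_sub_mul_le {u w z : E} (hu : ‖u‖ = 1) (hw : ‖w‖ = 1) (hz : ‖z‖ = 1) :
    (⟪u, z⟫ - ⟪u, w⟫ * ⟪w, z⟫) ^ 2 ≤ (1 - ⟪u, w⟫ ^ 2) * (1 - ⟪w, z⟫ ^ 2) := by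
  have h := real_inner_mul_inner_self_le (u - ⟪u, w⟫ • w) (z - ⟪w, z⟫ • w)
  simp only [inner_sub_left, inner_sub_right, real_inner_smul_left, real_inner_smul_right,
    real_inner_self_eq_norm_sq, norm_smul, Real.norm_eq_abs, mul_pow, sq_abs, hu, hw, hz,
    real_inner_comm u w, real_inner_comm w z] at h
  nlinarith [h]

theorem sq_inner_le_one {u w : E} (hu : ‖u‖ = 1) (hw : ‖w‖ = 1) : ⟪u, w⟫ ^ 2 ≤ 1 := by
  have h := abs_real_inner_le_norm u w
  rw [hu, hw, one_mul] at h
  nlinarith [abs_le.mp h]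

theorem one_div_hundred_lt_sq_inner {u w z : E} (hu : ‖u‖ = 1) (hw : ‖w‖ = 1) (hz : ‖z‖ = 1)
    (huw : 81 / 100 ≤ ⟪u, w⟫ ^ 2) (hwz : 81 / 100 ≤ ⟪w, z⟫ ^ 2) : 1 / 100 < ⟪u, z⟫ ^ 2 := by
  have hP : 81 / 100 * (81 / 100) ≤ (⟪u, w⟫ * ⟪w, z⟫) ^ 2 := by
    rw [mul_pow]; exact mul_le_mul huw hwz (by norm_num) (sq_nonneg _)
  have hQ : (1 - ⟪u, w⟫ ^ 2) * (1 - ⟪w, z⟫ ^ 2) ≤ 19 / 100 * (19 / 100) :=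
    mul_le_mul (by linarith) (by linarith) (by linarith [sq_inner_le_one hw hz]) (by norm_num)
  nlinarith [sq_inner_sub_mul_le hu hw hz, sq_nonneg (2 * ⟪u, z⟫ - ⟪u, w⟫ * ⟪w, z⟫ / 2)]

theorem SimpleGraph.colorable_three_of_unit_vectors {V : Type*} (G : SimpleGraph V)
    [FiniteDimensional ℝ E] (hE : finrank ℝ E ≤ 3) (ℓ : V → E) (hℓ : ∀ i, ‖ℓ i‖ = 1)
    (hdich : Pairwise fun i j => ⟪ℓ i, ℓ j⟫ ^ 2 ≤ 1 / 100 ∨ 81 / 100 ≤ ⟪ℓ i, ℓ j⟫ ^ 2)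
    (hadj : ∀ i j, G.Adj i j → ⟪ℓ i, ℓ j⟫ ^ 2 < 81 / 100) : G.Colorable 3 := by
  have hself : ∀ i, 81 / 100 ≤ ⟪ℓ i, ℓ i⟫ ^ 2 := fun i => by
    rw [real_inner_self_eq_norm_sq, hℓ i]; norm_num
  let s : Setoid V :=
    { r := fun i j => 81 / 100 ≤ ⟪ℓ i, ℓ j⟫ ^ 2
      iseqv :=
        { refl := hself
          symm := fun h => by rwa [real_inner_comm]
          trans := fun {i j k} hij hjk => by
            rcases eq_or_ne i k with rfl | hik
            · exact hself i
            · exact (hdich hik).resolve_left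
                (one_div_hundred_lt_sq_inner (hℓ i) (hℓ j) (hℓ k) hij hjk).not_ge } }
  refine SimpleGraph.Coloring.colorable_of_isEmpty_embedding (α := Quotient s)
    (.mk (Quotient.mk s) fun h heq => (hadj _ _ h).not_ge (Quotient.exact heq)) ⟨fun g => ?_⟩
  have hg : AlmostOrthonormal (1 / 10) fun k => ℓ (g k).out := by
    refine ⟨fun k => hℓ _, fun k l hkl => ?_⟩
    have hnr : ¬ s.r (g k).out (g l).out := fun h => hkl (g.injective (Quotient.out_equiv_out.mp h))
    have hne : (g k).out ≠ (g l).out := fun h => hnr (h ▸ hself _)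
    exact abs_le_of_sq_le_sq (by linarith [(hdich hne).resolve_right hnr]) (by norm_num)
  have := hg.card_le_finrank (by norm_num)
  simp only [Fintype.card_fin] at this
  omega

theorem inner_le_norm_sq_or_inner_le_norm_sq (u w : E) :
    ⟪u, w⟫ ≤ ‖u‖ ^ 2 ∨ ⟪u, w⟫ ≤ ‖w‖ ^ 2 := by
  have h := real_inner_le_norm u w
  rcases le_total ‖u‖ ‖w‖ with huw | huw
  · exact Or.inr (h.trans (by nlinarith [norm_nonneg u]))
  · exact Or.inl (h.trans (by nlinarith [norm_nonneg w]))

theorem abs_inner_inv_norm_smul_le {u w : E} {ε : ℝ} (hε : ε < 1) (hu : 1 - ε ≤ ‖u‖ ^ 2)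
    (hw : 1 - ε ≤ ‖w‖ ^ 2) (huw : |⟪u, w⟫| ≤ ε) :
    |⟪‖u‖⁻¹ • u, ‖w‖⁻¹ • w⟫| ≤ ε / (1 - ε) := by
  have hprod : 1 - ε ≤ ‖u‖ * ‖w‖ := by
    refine (pow_le_pow_iff_left₀ (by linarith) (by positivity) two_ne_zero).mp ?_
    rw [mul_pow, sq (1 - ε)]
    exact mul_le_mul hu hw (by linarith) (sq_nonneg _)
  rw [real_inner_smul_left, real_inner_smul_right, ← mul_assoc, ← mul_inv, abs_mul,
    abs_inv, abs_of_nonneg (by positivity : 0 ≤ ‖u‖ * ‖w‖), inv_mul_eq_div]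
  exact div_le_div₀ ((abs_nonneg _).trans huw) huw (by linarith) hprod

theorem peetersGraph_adj_inl {N : ℕ} {G : SimpleGraph (Fin N)} {i j : Fin N} (h : G.Adj i j) :
    (peetersGraph N G).Adj (Sum.inl i) (Sum.inl j) := by
  simp [peetersGraph, peetersRel, h, h.ne]

theorem peetersGraph_adj_gadget {N : ℕ} (G : SimpleGraph (Fin N)) (q : Pairs N) :
    let G' := peetersGraph N G
    let i : PV N := Sum.inl q.val.1
    let j : PV N := Sum.inl q.val.2
    let a : PV N := Sum.inr (q, 0)
    let b : PV N := Sum.inr (q, 1)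
    let c : PV N := Sum.inr (q, 2)
    let d : PV N := Sum.inr (q, 3)
    G'.Adj i a ∧ G'.Adj i b ∧ G'.Adj a b ∧ G'.Adj j c ∧ G'.Adj j d ∧ G'.Adj c d ∧
      G'.Adj a j ∧ G'.Adj i d ∧ G'.Adj b c := by
  refine ⟨?_, ?_, ?_, ?_, ?_, ?_, ?_, ?_, ?_⟩ <;>
    exact SimpleGraph.fromRel_adj _ _ _ |>.mpr ⟨by simp, Or.inl (Or.inr ⟨q, by simp⟩)⟩

theorem colorable_of_peetersGraph_unit_vectors [FiniteDimensional ℝ E] (hE : finrank ℝ E ≤ 3)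
    {N : ℕ} {G : SimpleGraph (Fin N)} (ℓ : PV N → E) (hℓ : ∀ v, ‖ℓ v‖ = 1)
    (hedge : ∀ v w, (peetersGraph N G).Adj v w → |⟪ℓ v, ℓ w⟫| ≤ 1 / 1000) :
    G.Colorable 3 := by
  have hdich : ∀ i j : Fin N, i < j →
      ⟪ℓ (.inl i), ℓ (.inl j)⟫ ^ 2 ≤ 1 / 100 ∨ 81 / 100 ≤ ⟪ℓ (.inl i), ℓ (.inl j)⟫ ^ 2 := by
    intro i j hij
    obtain ⟨hia, hib, hab, hjc, hjd, hcd, haj, hid, hbc⟩ := peetersGraph_adj_gadget G ⟨(i, j), hij⟩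
    exact sq_inner_le_or_le_sq_inner_of_gadget hE (by norm_num) le_rfl
      (almostOrthonormal_three (hℓ _) (hℓ _) (hℓ _) (hedge _ _ hia) (hedge _ _ hib)
        (hedge _ _ hab))
      (almostOrthonormal_three (hℓ _) (hℓ _) (hℓ _) (hedge _ _ hjc) (hedge _ _ hjd)
        (hedge _ _ hcd))
      (hedge _ _ haj) (hedge _ _ hid) (hedge _ _ hbc)
  refine G.colorable_three_of_unit_vectors hE (ℓ ∘ .inl) (fun _ => hℓ _) (fun i j hij => ?_)
    (fun i j h => ?_)
  · rcases hij.lt_or_gt with h | h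
    · exact hdich i j h
    · simpa only [Function.comp_apply, real_inner_comm] using hdich j i h
  · have := abs_le.mp (hedge _ _ (peetersGraph_adj_inl h))
    simp only [Function.comp_apply]
    nlinarith

theorem exists_unit_vectors_of_fitsX {N : ℕ} {G : SimpleGraph (Fin N)}
    {L H : Matrix (Idx N) (Idx N) ℝ} (hL : FitsX N G L) (hH : ∀ p q, |H p q| ≤ 1 / 2000)
    (hM : (AP3 N + L + H).PosSemidef) :
    ∃ (W : Submodule ℝ (EuclideanSpace ℝ (Idx N))) (ℓ : PV N → W),
      finrank ℝ W = (AP3 N + L + H).rank ∧ (∀ x, ‖ℓ x‖ = 1) ∧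
        ∀ x y, (peetersGraph N G).Adj x y → |⟪ℓ x, ℓ y⟫| ≤ 1 / 1000 := by
  obtain ⟨W, v, hgram, hW⟩ := hM.exists_gram
  have hv : ∀ p q, ⟪v p, v q⟫ = (AP3 N + L + H) p q := fun p q => by rw [← hgram, gram_apply]
  have hlong : ∀ x, ∃ μ, 1 - 1 / 2000 ≤ ‖v (x, μ)‖ ^ 2 := by
    intro x
    have h01 : 1 - 1 / 2000 ≤ ⟪v (x, 0), v (x, 1)⟫ := by
      rw [hv]
      simp [AP3, hL.2 x 0 1 (by decide)]
      linarith [(abs_le.mp (hH (x, 0) (x, 1))).1]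
    rcases inner_le_norm_sq_or_inner_le_norm_sq (v (x, 0)) (v (x, 1)) with h | h
    exacts [⟨0, h01.trans h⟩, ⟨1, h01.trans h⟩]
  choose μ hμ using hlong
  have hne : ∀ x, v (x, μ x) ≠ 0 := fun x h0 => by
    have := hμ x
    rw [h0, norm_zero] at this
    norm_num at this
  refine ⟨W, fun x => ‖v (x, μ x)‖⁻¹ • v (x, μ x), hW, fun x => norm_smul_inv_norm (hne x),
    fun x y h => (abs_inner_inv_norm_smul_le (by norm_num) (hμ x) (hμ y) ?_).trans (by norm_num)⟩
  rw [hv]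
  simpa [AP3, h.ne, hL.1 (x, μ x) (y, μ y) h] using hH (x, μ x) (y, μ y)

/-- There is a universal constant `ε₀ > 0` such that for every graph
`G`, if the `(P3)` input construction `(A, X)` admits symmetric `L, H` with `L` fitting
`X`, `‖H‖_F ≤ ε₀`, `A + L + H ⪰ 0` and `rank (A + L + H) ≤ 3`, then `G` is
3-colorable. -/
theorem stmt8 :
    ∃ ε₀ : ℝ, 0 < ε₀ ∧
      ∀ (N : ℕ) (G : SimpleGraph (Fin N)) (L H : Matrix (Idx N) (Idx N) ℝ),
        L.IsSymm → H.IsSymm → FitsX N G L → frob H ≤ ε₀ →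
        (AP3 N + L + H).PosSemidef → (AP3 N + L + H).rank ≤ 3 →
        G.Colorable 3 := by
  refine ⟨1 / 2000, by norm_num, fun N G L H _ _ hL hH hM hrank => ?_⟩
  obtain ⟨W, ℓ, hW, hℓ, hedge⟩ :=
    exists_unit_vectors_of_fitsX hL (fun p q => (abs_apply_le_frob H p q).trans hH) hM
  exact colorable_of_peetersGraph_unit_vectors (hW.trans_le hrank) ℓ hℓ hedge

end
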